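/- For every finite simple graph G with vertex set V, the odd independence number satisfies αod(G) ≥ Σ_{v∈V} 1/(deg_{G²}(v) + 1), where deg_{G²}(v) is the degree of v in the square of G. -/

import Mathlib

open Finset

section OddIndepDefs

variable {V : Type*} [Fintype V] [DecidableEq V]

/-- `S` is an odd independent set in `G`: `S` is independent and every vertex outside `S`
has either no neighbor in `S` or an odd number of neighbors in `S`. -/
def IsOddIndepSet (G : SimpleGraph V) [DecidableRel G.Adj] (S : Finset V) : Prop :=
  (∀ u ∈ S, ∀ v ∈ S, ¬ G.Adj u v) ∧
  ∀ v ∉ S, (S.filter fun u => G.Adj v u) = ∅ ∨ Odd (S.filter fun u => G.Adj v u).card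

/-- The odd independence number: the largest size of an odd independent set. -/
noncomputable def oddIndepNum (G : SimpleGraph V) [DecidableRel G.Adj] : ℕ :=
  sSup {k | ∃ S : Finset V, IsOddIndepSet G S ∧ S.card = k}

/-- The independence number: the largest size of an independent set. -/
noncomputable def indepNum (G : SimpleGraph V) : ℕ :=
  sSup {k | ∃ S : Finset V, (∀ u ∈ S, ∀ v ∈ S, ¬ G.Adj u v) ∧ S.card = k}

/-- A strong odd coloring with `n` colors: a proper coloring such that for every vertex `v`,
every color appearing in the open neighborhood of `v` appears there an odd number of times. -/
def IsStrongOddColoring (G : SimpleGraph V) [DecidableRel G.Adj] {n : ℕ} (c : V → Fin n) : Prop :=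
  (∀ u v, G.Adj u v → c u ≠ c v) ∧
  ∀ v : V, ∀ k : Fin n,
    (univ.filter fun u => G.Adj v u ∧ c u = k) = ∅ ∨
    Odd (univ.filter fun u => G.Adj v u ∧ c u = k).card

/-- The strong odd chromatic number: minimum number of colors of a strong odd coloring. -/
noncomputable def strongOddChromNum (G : SimpleGraph V) [DecidableRel G.Adj] : ℕ :=
  sInf {n | ∃ c : V → Fin n, IsStrongOddColoring G c}

/-- The chromatic number, as a natural number. -/
noncomputable def chromNum (G : SimpleGraph V) : ℕ :=
  sInf {n | ∃ c : V → Fin n, ∀ u v, G.Adj u v → c u ≠ c v}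

/-- The square of a graph: two distinct vertices are adjacent iff they are at distance at most 2,
i.e. adjacent or having a common neighbor. -/
def graphSquare (G : SimpleGraph V) : SimpleGraph V where
  Adj u v := u ≠ v ∧ (G.Adj u v ∨ ∃ w, G.Adj u w ∧ G.Adj w v)
  symm := by
    constructor
    intro u v h
    refine ⟨h.1.symm, ?_⟩
    rcases h.2 with h' | ⟨w, h1, h2⟩
    · exact Or.inl h'.symm
    · exact Or.inr ⟨w, h2.symm, h1.symm⟩
  loopless := ⟨fun v h => h.1 rfl⟩

instance (G : SimpleGraph V) [DecidableRel G.Adj] : DecidableRel (graphSquare G).Adj :=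
  fun u v => inferInstanceAs (Decidable (u ≠ v ∧ (G.Adj u v ∨ ∃ w, G.Adj u w ∧ G.Adj w v)))

end OddIndepDefs

/-! An independent set of `G²` is odd independent in `G`: a vertex outside it has at most one
neighbour in it, since two would be at distance two in `G`. Hence `αod(G) ≥ α(G²)`, and the
Caro–Wei bound `α(H) ≥ ∑ᵥ 1/(deg_H v + 1)` for `H = G²` gives the claim. Caro–Wei follows
greedily: put a vertex of minimum degree into the set and delete its closed neighbourhood, whose
terms sum to at most one; deleting vertices only lowers the remaining degrees. -/

namespace SimpleGraph

variable {V : Type*} [DecidableEq V] (H : SimpleGraph V) [DecidableRel H.Adj]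

theorem sum_closedNbhd_inv_card_adj_add_one_le_one {s : Finset V} {v : V}
    (hv_min : ∀ u ∈ s, #{w ∈ s | H.Adj v w} ≤ #{w ∈ s | H.Adj u w}) :
    ∑ u ∈ s with u = v ∨ H.Adj v u, (1 : ℝ) / (#{w ∈ s | H.Adj u w} + 1) ≤ 1 := by
  set d := #{w ∈ s | H.Adj v w}
  have hcard : #{u ∈ s | u = v ∨ H.Adj v u} ≤ d + 1 := by
    calc #{u ∈ s | u = v ∨ H.Adj v u} ≤ #(insert v {w ∈ s | H.Adj v w}) := by
          refine card_le_card fun u hu => ?_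
          simp only [mem_filter, mem_insert] at hu ⊢
          tauto
      _ ≤ d + 1 := card_insert_le _ _
  calc _ ≤ #{u ∈ s | u = v ∨ H.Adj v u} • ((1 : ℝ) / (d + 1)) := by
        refine sum_le_card_nsmul _ _ _ fun u hu => one_div_le_one_div_of_le (by positivity) ?_
        exact_mod_cast Nat.add_le_add_right (hv_min u (mem_filter.1 hu).1) 1
    _ ≤ (d + 1) • ((1 : ℝ) / (d + 1)) := by gcongr
    _ = 1 := by
        rw [nsmul_eq_mul]
        push_cast
        field_simp

theorem exists_isIndepSet_subset_sum_inv_card_adj_add_one_le (s : Finset V) :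
    ∃ t ⊆ s, H.IsIndepSet (t : Set V) ∧
      ∑ v ∈ s, (1 : ℝ) / (#{u ∈ s | H.Adj v u} + 1) ≤ #t := by
  induction s using Finset.strongInduction with
  | H s ih =>
  rcases s.eq_empty_or_nonempty with rfl | hs
  · exact ⟨∅, subset_rfl, by simp⟩
  obtain ⟨v, hvs, hv_min⟩ := s.exists_min_image (fun u => #{w ∈ s | H.Adj u w}) hs
  set r := {u ∈ s | ¬(u = v ∨ H.Adj v u)}
  have hrs : r ⊂ s := filter_ssubset.2 ⟨v, hvs, by simp⟩
  obtain ⟨t, htr, ht, hsum⟩ := ih r hrs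
  have hvt : v ∉ t := fun h => by simpa [r] using htr h
  refine ⟨insert v t, insert_subset hvs (htr.trans hrs.subset), ?_, ?_⟩
  · rw [coe_insert]
    refine Set.pairwise_insert.2 ⟨ht, fun u hu _ => ?_⟩
    have hvu : ¬H.Adj v u := fun h => (mem_filter.1 (htr hu)).2 (Or.inr h)
    exact ⟨hvu, fun h => hvu h.symm⟩
  · have hclosed := H.sum_closedNbhd_inv_card_adj_add_one_le_one hv_min
    have hrest : ∑ u ∈ r, (1 : ℝ) / (#{w ∈ s | H.Adj u w} + 1)
        ≤ ∑ u ∈ r, (1 : ℝ) / (#{w ∈ r | H.Adj u w} + 1) := by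
      gcongr
    rw [← sum_filter_add_sum_filter_not s (fun u => u = v ∨ H.Adj v u), card_insert_of_notMem hvt]
    push_cast
    linarith

theorem sum_inv_degree_add_one_le_indepNum [Fintype V] :
    ∑ v, (1 : ℝ) / (H.degree v + 1) ≤ H.indepNum := by
  obtain ⟨t, -, ht, hsum⟩ := H.exists_isIndepSet_subset_sum_inv_card_adj_add_one_le univ
  simp only [← neighborFinset_eq_filter, card_neighborFinset_eq_degree] at hsum
  exact hsum.trans (mod_cast ht.card_le_indepNum)

end SimpleGraph

section OddIndep

variable {V : Type*} {G : SimpleGraph V}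

theorem le_graphSquare : G ≤ graphSquare G := fun _ _ h => ⟨h.ne, Or.inl h⟩

variable [DecidableRel G.Adj]

theorem IsOddIndepSet.of_isIndepSet_graphSquare {S : Finset V}
    (hS : (graphSquare G).IsIndepSet (S : Set V)) : IsOddIndepSet G S := by
  refine ⟨fun u hu w hw huw => hS hu hw huw.ne (le_graphSquare huw), fun v _ => ?_⟩
  have hle : #{u ∈ S | G.Adj v u} ≤ 1 := by
    refine card_le_one.2 fun a ha b hb => by_contra fun hab => ?_
    rw [mem_filter] at ha hb
    exact hS ha.1 hb.1 hab ⟨hab, Or.inr ⟨v, ha.2.symm, hb.2⟩⟩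
  rcases Nat.le_one_iff_eq_zero_or_eq_one.1 hle with h | h
  · exact Or.inl (card_eq_zero.1 h)
  · exact Or.inr (h ▸ odd_one)

variable [Fintype V]

theorem IsOddIndepSet.card_le_oddIndepNum {S : Finset V} (hS : IsOddIndepSet G S) :
    #S ≤ oddIndepNum G :=
  le_csSup ⟨Fintype.card V, fun _ ⟨T, _, hT⟩ => hT ▸ card_le_univ T⟩ ⟨S, hS, rfl⟩

theorem indepNum_graphSquare_le_oddIndepNum : (graphSquare G).indepNum ≤ oddIndepNum G := by
  obtain ⟨S, hS⟩ := (graphSquare G).exists_isNIndepSet_indepNum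
  rw [← hS.card_eq]
  exact (IsOddIndepSet.of_isIndepSet_graphSquare hS.isIndepSet).card_le_oddIndepNum

end OddIndep

/-- For every finite simple graph `G` with vertex set `V`,
`αod(G) ≥ Σ_{v ∈ V} 1/(deg_{G²}(v) + 1)`. -/
theorem sum_inv_degree_graphSquare_add_one_le_oddIndepNum
    {V : Type*} [Fintype V] [DecidableEq V] (G : SimpleGraph V) [DecidableRel G.Adj] :
    ∑ v : V, (1 : ℝ) / ((graphSquare G).degree v + 1) ≤ (oddIndepNum G : ℝ) := by
  calc ∑ v : V, (1 : ℝ) / ((graphSquare G).degree v + 1)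
      ≤ (graphSquare G).indepNum := (graphSquare G).sum_inv_degree_add_one_le_indepNum
    _ ≤ oddIndepNum G := mod_cast indepNum_graphSquare_le_oddIndepNum
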